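/- Closed-loop minimality (controllability part): suppose (A,B) is controllable, (A,C) is observable, and the controller realization (A_K, B_K, C_K) is controllable, i.e., (A_K, B_K) is controllable. If additionally the pair formed by the closed-loop matrix A_cl = [[A, B·C_K],[B_K·C, A_K]] and input matrix B_cl = [[I, 0],[0, B_K]] fails the PBH controllability test at some λ, then there is a nonzero left eigenvector (x, ξ) of A_cl with xᵀ = 0 or ξᵀ·B_K = 0 leading to a contradiction; consequently (A_cl, B_cl) is controllable. -/

import Mathlib

open Matrix

/-- PBH controllability test: `(M,N)` is controllable iff every nonzero left eigenvector
`z` of `M` (over ℂ) satisfies `z·N ≠ 0`. -/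
def PBHControllable {k l : Type*} [Fintype k] [Fintype l]
    (M : Matrix k k ℝ) (N : Matrix k l ℝ) : Prop :=
  ∀ (μ : ℂ) (z : k → ℂ), z ≠ 0 → z ᵥ* (M.map Complex.ofReal) = μ • z →
    z ᵥ* (N.map Complex.ofReal) ≠ 0

/-- PBH observability test: `(M,C)` is observable iff every nonzero (right) eigenvector
`x` of `M` (over ℂ) satisfies `C·x ≠ 0`. -/
def PBHObservable {k p : Type*} [Fintype k] [Fintype p]
    (M : Matrix k k ℝ) (C : Matrix p k ℝ) : Prop :=
  ∀ (μ : ℂ) (x : k → ℂ), x ≠ 0 → (M.map Complex.ofReal) *ᵥ x = μ • x →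
    (C.map Complex.ofReal) *ᵥ x ≠ 0

/-!
A left eigenvector `(x, ξ)` of `A_cl` annihilating `B_cl = [[I, 0], [0, B_K]]` must have
`x = 0` and `ξ B_K = 0`. The second block row of the eigen-equation then reads
`ξ A_K = λ ξ`, with `ξ ≠ 0`, contradicting the PBH test for `(A_K, B_K)`.
-/

section BlockPBH

variable {k l q : Type*} [Fintype k] [Fintype l] [DecidableEq k]

lemma vecMul_fromBlocks_one_zero_zero_eq_zero_iff {R : Type*} [Semiring R]
    (z : k ⊕ l → R) (N : Matrix l q R) :
    z ᵥ* fromBlocks (1 : Matrix k k R) 0 0 N = 0 ↔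
      z ∘ Sum.inl = 0 ∧ (z ∘ Sum.inr) ᵥ* N = 0 := by
  simp [vecMul_fromBlocks, ← Sum.elim_zero_zero, Sum.elim_eq_iff]

theorem PBHControllable.fromBlocks_one_zero_zero [Fintype q] (M₁₁ : Matrix k k ℝ)
    (M₁₂ : Matrix k l ℝ) (M₂₁ : Matrix l k ℝ) {M₂₂ : Matrix l l ℝ} {N : Matrix l q ℝ}
    (h : PBHControllable M₂₂ N) :
    PBHControllable (fromBlocks M₁₁ M₁₂ M₂₁ M₂₂) (fromBlocks (1 : Matrix k k ℝ) 0 0 N) := by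
  intro μ z hz hev hzero
  rw [fromBlocks_map, Matrix.map_one _ Complex.ofReal_zero Complex.ofReal_one,
    Matrix.map_zero _ rfl, Matrix.map_zero _ rfl,
    vecMul_fromBlocks_one_zero_zero_eq_zero_iff] at hzero
  obtain ⟨hx, hξN⟩ := hzero
  have hξ : z ∘ Sum.inr ≠ 0 := fun hξ ↦ hz <| by
    rw [← Sum.elim_comp_inl_inr z, hx, hξ, Sum.elim_zero_zero]
  have hevξ : (z ∘ Sum.inr) ᵥ* M₂₂.map Complex.ofReal = μ • (z ∘ Sum.inr) := by
    ext i
    simpa [fromBlocks_map, vecMul_fromBlocks, hx] using congrFun hev (Sum.inr i)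
  exact h μ _ hξ hevξ hξN

end BlockPBH

theorem closed_loop_controllable_general {n m p : ℕ}
    (A : Matrix (Fin n) (Fin n) ℝ) (B : Matrix (Fin n) (Fin m) ℝ)
    (C : Matrix (Fin p) (Fin n) ℝ)
    (AK : Matrix (Fin n) (Fin n) ℝ) (BK : Matrix (Fin n) (Fin p) ℝ)
    (CK : Matrix (Fin m) (Fin n) ℝ)
    (hK : PBHControllable AK BK) :
    PBHControllable
      (Matrix.fromBlocks A (B * CK) (BK * C) AK)
      (Matrix.fromBlocks (1 : Matrix (Fin n) (Fin n) ℝ) 0 0 BK) :=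
  hK.fromBlocks_one_zero_zero A (B * CK) (BK * C)

/-- Closed-loop controllability: if the plant `(A,B)` is controllable, `(A,C)` is
observable, and the controller pair `(A_K, B_K)` is controllable, then the closed-loop
pair `(A_cl, B_cl)` with `A_cl = [[A, B·C_K],[B_K·C, A_K]]`, `B_cl = [[I,0],[0,B_K]]`
is controllable. -/
theorem closed_loop_controllable {n m p : ℕ}
    (A : Matrix (Fin n) (Fin n) ℝ) (B : Matrix (Fin n) (Fin m) ℝ)
    (C : Matrix (Fin p) (Fin n) ℝ)
    (AK : Matrix (Fin n) (Fin n) ℝ) (BK : Matrix (Fin n) (Fin p) ℝ)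
    (CK : Matrix (Fin m) (Fin n) ℝ)
    (hAB : PBHControllable A B) (hAC : PBHObservable A C)
    (hK : PBHControllable AK BK) :
    PBHControllable
      (Matrix.fromBlocks A (B * CK) (BK * C) AK)
      (Matrix.fromBlocks (1 : Matrix (Fin n) (Fin n) ℝ) 0 0 BK) :=
  closed_loop_controllable_general A B C AK BK CK hK
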